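/- arXiv:2012.06011 — 6 statements merged into one kernel-verified Lean document; each statement's English description precedes it below -/
import Mathlib

section
/- Let S_1, ..., S_m be subsets of ℝ^n with m > n, and for each i let K_i denote the convex hull of S_i. For every point x in the Minkowski sum K_1 + K_2 + ... + K_m, there exists a subset T ⊆ {1, ..., m} with |T| = n, a point z in the Minkowski sum of the K_t for t ∈ T, and points y_s ∈ S_s for each s ∉ T, such that x = z + Σ_{s ∉ T} y_s. -/
/-!
Write each `x i ∈ convexHull (S i)` as a convex combination of finitely many points `y ∈ S i`
and lift every such point to `(y, eᵢ)` in `E × 𝕜^ι`. Then `(x, 1, …, 1)` is a nonnegative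
combination of the lifted points, and by the conic Carathéodory theorem it is already one of at most
`dim E + |ι|` of them. The `eᵢ`-coordinates force the weights on each block `i` to sum to `1`,
so every block keeps a point, and at most `dim E` blocks keep more than one; every other block
contributes a single point of `S i` with weight `1`.
-/

open Pointwise Finset Module

theorem Module.exists_nontrivial_relation_family_of_finrank_lt_card {R M α : Type*} [Ring R]
    [StrongRankCondition R] [AddCommGroup M] [Module R M] [Module.Finite R M]
    {s : Finset α} {p : α → M} (h : finrank R M < #s) :
    ∃ f : α → R, ∑ a ∈ s, f a • p a = 0 ∧ ∃ a ∈ s, f a ≠ 0 := by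
  classical
  have hdep : ¬LinearIndependent R (fun a : s => p a) := fun hli =>
    h.not_ge (by simpa using hli.fintype_card_le_finrank)
  obtain ⟨g, hg, a, ha⟩ := Fintype.not_linearIndependent_iff.mp hdep
  refine ⟨fun b => if hb : b ∈ s then g ⟨b, hb⟩ else 0, ?_, a, a.2, by simpa using ha⟩
  rw [← sum_coe_sort s]
  simpa using hg

theorem sum_smul_prod_mk_single {R E ι α : Type*} [Semiring R] [AddCommMonoid E] [Module R E]
    [DecidableEq ι] (t : Finset α) (π : α → ι) (q : α → E) (w : α → R) :
    ∑ a ∈ t, w a • (q a, Pi.single (π a) (1 : R)) =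
      (∑ a ∈ t, w a • q a, fun i => ∑ a ∈ t with π a = i, w a) := by
  refine Prod.ext (by simp [Prod.fst_sum]) (funext fun i => ?_)
  simp [Prod.snd_sum, Finset.sum_apply, Pi.single_apply, sum_filter, eq_comm]

theorem sum_smul_mem_of_card_le_one {R E α : Type*} [Semiring R] [Nontrivial R] [AddCommMonoid E]
    [Module R E] {s : Finset α} {w : α → R} {q : α → E} {S : Set E} (hs : #s ≤ 1)
    (hw : ∑ a ∈ s, w a = 1) (hq : ∀ a ∈ s, q a ∈ S) : ∑ a ∈ s, w a • q a ∈ S := by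
  obtain ⟨a, rfl⟩ := card_eq_one.1
    (le_antisymm hs (card_pos.2 (nonempty_of_sum_ne_zero (hw ▸ one_ne_zero))))
  rw [sum_singleton] at hw ⊢
  rw [hw, one_smul]
  exact hq a (mem_singleton_self a)

theorem card_filter_one_lt_card_fiber_add_card_le {ι α : Type*} [Fintype ι] [DecidableEq ι]
    {s : Finset α} {π : α → ι} (hπ : ∀ i, ({a ∈ s | π a = i}).Nonempty) :
    #{i | 1 < #{a ∈ s | π a = i}} + Fintype.card ι ≤ #s := by
  calc #{i | 1 < #{a ∈ s | π a = i}} + Fintype.card ι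
      = ∑ i, ((if 1 < #{a ∈ s | π a = i} then 1 else 0) + 1) := by
        rw [sum_add_distrib, ← card_filter]
        simp
    _ ≤ ∑ i, #{a ∈ s | π a = i} := sum_le_sum fun i _ => by
        have := card_pos.2 (hπ i)
        split_ifs <;> omega
    _ = #s := (card_eq_sum_card_fiberwise fun a _ => mem_univ (π a)).symm

section LinearOrderedField

variable {𝕜 E α : Type*} [Field 𝕜] [LinearOrder 𝕜] [IsStrictOrderedRing 𝕜]
  [AddCommGroup E] [Module 𝕜 E]

theorem exists_mem_nonneg_sum_smul_erase_eq [DecidableEq α] {s : Finset α} {p : α → E}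
    {w f : α → 𝕜} (hw : ∀ a ∈ s, 0 ≤ w a) (hf : ∑ a ∈ s, f a • p a = 0)
    (hpos : ∃ a ∈ s, 0 < f a) :
    ∃ a₀ ∈ s, ∃ w' : α → 𝕜, (∀ a ∈ s.erase a₀, 0 ≤ w' a) ∧
      ∑ a ∈ s.erase a₀, w' a • p a = ∑ a ∈ s, w a • p a := by
  obtain ⟨a₀, ha₀, hmin⟩ := exists_min_image {a ∈ s | 0 < f a} (fun a => w a / f a)
    (by simpa [Finset.Nonempty] using hpos)
  rw [mem_filter] at ha₀
  -- `r` is the largest step from `w` along `-f` that keeps all weights nonnegative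
  set r := w a₀ / f a₀
  have hr : 0 ≤ r := div_nonneg (hw _ ha₀.1) ha₀.2.le
  have hnonneg : ∀ a ∈ s, 0 ≤ w a - r * f a := by
    intro a ha
    rcases le_or_gt (f a) 0 with hfa | hfa
    · nlinarith [hw a ha]
    · linarith [(le_div_iff₀ hfa).1 (hmin a (mem_filter.2 ⟨ha, hfa⟩))]
  have hzero : w a₀ - r * f a₀ = 0 := by simp [r, div_mul_cancel₀ _ ha₀.2.ne']
  refine ⟨a₀, ha₀.1, fun a => w a - r * f a, fun a ha => hnonneg a (mem_of_mem_erase ha), ?_⟩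
  rw [sum_erase _ (by simp [hzero])]
  simp only [sub_smul, mul_smul, sum_sub_distrib, ← smul_sum, hf, smul_zero, sub_zero]

theorem exists_subset_card_le_finrank_nonneg_sum_smul_eq [FiniteDimensional 𝕜 E]
    (s : Finset α) (p : α → E) {w : α → 𝕜} (hw : ∀ a ∈ s, 0 ≤ w a) :
    ∃ t ⊆ s, #t ≤ finrank 𝕜 E ∧ ∃ w' : α → 𝕜, (∀ a ∈ t, 0 ≤ w' a) ∧
      ∑ a ∈ t, w' a • p a = ∑ a ∈ s, w a • p a := by
  classical
  induction s using Finset.strongInduction generalizing w with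
  | H s ih =>
  rcases le_or_gt #s (finrank 𝕜 E) with hs | hs
  · exact ⟨s, subset_rfl, hs, w, hw, rfl⟩
  obtain ⟨f, hf, a, ha, hfa⟩ := exists_nontrivial_relation_family_of_finrank_lt_card (p := p) hs
  obtain ⟨g, hg, hgpos⟩ : ∃ g : α → 𝕜, ∑ a ∈ s, g a • p a = 0 ∧ ∃ a ∈ s, 0 < g a := by
    rcases hfa.lt_or_gt with hneg | hpos
    · exact ⟨-f, by simp [neg_smul, sum_neg_distrib, hf], a, ha, by simpa using hneg⟩
    · exact ⟨f, hf, a, ha, hpos⟩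
  obtain ⟨a₀, ha₀, w', hw', hsum⟩ := exists_mem_nonneg_sum_smul_erase_eq hw hg hgpos
  obtain ⟨t, hts, htcard, w'', hw'', htsum⟩ := ih _ (erase_ssubset ha₀) hw'
  exact ⟨t, hts.trans (erase_subset _ _), htcard, w'', hw'', htsum.trans hsum⟩

theorem exists_subset_card_le_finrank_add_card_fiberwise {ι : Type*} [Fintype ι] [DecidableEq ι]
    [FiniteDimensional 𝕜 E] (t : Finset α) (π : α → ι) (q : α → E) {w : α → 𝕜}
    (hw : ∀ a ∈ t, 0 ≤ w a) :
    ∃ t' ⊆ t, #t' ≤ finrank 𝕜 E + Fintype.card ι ∧ ∃ w' : α → 𝕜, (∀ a ∈ t', 0 ≤ w' a) ∧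
      ∑ a ∈ t', w' a • q a = ∑ a ∈ t, w a • q a ∧
      ∀ i, ∑ a ∈ t' with π a = i, w' a = ∑ a ∈ t with π a = i, w a := by
  obtain ⟨t', ht', hcard, w', hw', hsum⟩ := exists_subset_card_le_finrank_nonneg_sum_smul_eq t
    (fun a => ((q a, Pi.single (π a) 1) : E × (ι → 𝕜))) hw
  rw [sum_smul_prod_mk_single, sum_smul_prod_mk_single, Prod.mk.injEq] at hsum
  rw [finrank_prod, finrank_fintype_fun_eq_card] at hcard
  exact ⟨t', ht', hcard, w', hw', hsum.1, congrFun hsum.2⟩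

theorem exists_finset_subset_sum_smul_eq_of_mem_convexHull {S : Set E} {x : E}
    (hx : x ∈ convexHull 𝕜 S) :
    ∃ (u : Finset E) (v : E → 𝕜), ↑u ⊆ S ∧ (∀ y ∈ u, 0 ≤ v y) ∧ ∑ y ∈ u, v y = 1 ∧
      ∑ y ∈ u, v y • y = x := by
  rw [convexHull_eq_union_convexHull_finite_subsets, Set.mem_iUnion₂] at hx
  obtain ⟨u, hu, hxu⟩ := hx
  obtain ⟨v, hv⟩ := Finset.mem_convexHull'.1 hxu
  exact ⟨u, v, hu, hv⟩

theorem exists_sum_eq_forall_notMem_mem_of_mem_sum_convexHull {ι : Type*} [Fintype ι]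
    [FiniteDimensional 𝕜 E] {S : ι → Set E} {x : E} (hx : x ∈ ∑ i, convexHull 𝕜 (S i)) :
    ∃ y : ι → E, (∀ i, y i ∈ convexHull 𝕜 (S i)) ∧ ∑ i, y i = x ∧
      ∃ T : Finset ι, #T ≤ finrank 𝕜 E ∧ ∀ i ∉ T, y i ∈ S i := by
  classical
  obtain ⟨g, hg, rfl⟩ := (Set.mem_fintype_sum _ _).1 hx
  choose u v hu hv0 hv1 hvg using fun i => exists_finset_subset_sum_smul_eq_of_mem_convexHull (hg i)
  obtain ⟨t, ht, htcard, w, hw0, hwq, hwπ⟩ :=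
    exists_subset_card_le_finrank_add_card_fiberwise (univ.sigma u) Sigma.fst Sigma.snd
      (w := fun a => v a.1 a.2) (fun a ha => hv0 _ _ (mem_sigma.1 ha).2)
  have hfiber : ∀ i, ∑ a ∈ t with a.1 = i, w a = 1 := fun i => by
    rw [hwπ, sum_filter, sum_sigma]
    simp [hv1]
  have hS : ∀ a ∈ t, a.2 ∈ S a.1 := fun a ha => hu _ (mem_sigma.1 (ht ha)).2
  refine ⟨fun i => ∑ a ∈ t with a.1 = i, w a • a.2, fun i => ?_, ?_,
    ({i | 1 < #{a ∈ t | a.1 = i}} : Finset ι), ?_, fun i hi => ?_⟩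
  · exact (convex_convexHull 𝕜 _).sum_mem (fun a ha => hw0 a (mem_filter.1 ha).1) (hfiber i)
      fun a ha => subset_convexHull 𝕜 _ ((mem_filter.1 ha).2 ▸ hS a (mem_filter.1 ha).1)
  · rw [sum_fiberwise t Sigma.fst fun a => w a • a.2, hwq, sum_sigma]
    exact sum_congr rfl fun i _ => hvg i
  · have := card_filter_one_lt_card_fiber_add_card_le (s := t) (π := Sigma.fst) fun i =>
      nonempty_of_sum_ne_zero ((hfiber i).symm ▸ one_ne_zero)
    omega
  · exact sum_smul_mem_of_card_le_one (by simpa using hi) (hfiber i)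
      fun a ha => (mem_filter.1 ha).2 ▸ hS a (mem_filter.1 ha).1

end LinearOrderedField

/-- **The Shapley–Folkman lemma.**  Let `S 0, …, S (m-1)` be subsets of `ℝ^n` with `m > n`.
For every point `x` in the Minkowski sum of the convex hulls `convexHull ℝ (S i)`, there is a
subset `T` of the index set with `|T| = n`, a point `z` in the Minkowski sum of the
`convexHull ℝ (S t)` for `t ∈ T`, and points `y s ∈ S s` for `s ∉ T`, with
`x = z + ∑_{s ∉ T} y s`. -/
theorem shapley_folkman_lemma (n m : ℕ) (hmn : n < m) (S : Fin m → Set (Fin n → ℝ))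
    (x : Fin n → ℝ) (hx : x ∈ ∑ i : Fin m, convexHull ℝ (S i)) :
    ∃ T : Finset (Fin m), T.card = n ∧
      ∃ z ∈ ∑ t ∈ T, convexHull ℝ (S t),
        ∃ y : Fin m → Fin n → ℝ,
          (∀ s, s ∉ T → y s ∈ S s) ∧ x = z + ∑ s ∈ Tᶜ, y s := by
  obtain ⟨y, hyS, hyx, T₀, hT₀, hT₀S⟩ := exists_sum_eq_forall_notMem_mem_of_mem_sum_convexHull hx
  obtain ⟨T, hT₀T, -, hT⟩ := exists_subsuperset_card_eq (subset_univ T₀)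
    (by simpa using hT₀) (by simpa using hmn.le)
  refine ⟨T, hT, ∑ i ∈ T, y i, Set.finsetSum_mem_finsetSum _ _ _ fun i _ => hyS i, y,
    fun s hs => hT₀S s fun h => hs (hT₀T h), ?_⟩
  rw [sum_add_sum_compl, hyx]
end

section
/- Let S be a finite subset of ℤ^n, let K be the convex hull of S in ℝ^n, and let m ≥ n be an integer. Then mK ∩ ℤ^n = (nK ∩ ℤ^n) + (m−n)·(K ∩ ℤ^n), where the right-hand side is a Minkowski sum of sets. Equivalently, every lattice point x ∈ mK can be written x = z + y_1 + ... + y_{m−n} with z a lattice point of nK and each y_s ∈ S. -/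
/-!
By Carathéodory, a point `x` of `t • convexHull S` in an `n`-dimensional space is `t` times a
convex combination of at most `n + 1` points of `S`, so when `t ≥ n + 1` one of these points
carries a coefficient `≥ 1` in `x`. Subtracting it leaves a point of `(t - 1) • convexHull S`,
still a lattice point when `x` and `S` are. Peeling off `m - n` points of `S` in this way gives
`mK ∩ ℤⁿ ⊆ (nK ∩ ℤⁿ) + (m - n)(K ∩ ℤⁿ)`; the reverse inclusion is `(a + b) • K = a • K + b • K`
for convex `K` and `a, b ≥ 0`.
-/

open Pointwise

/-- The set of lattice points (points with integer coordinates) of `ℝ^n`. -/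
def latticePoints (n : ℕ) : Set (Fin n → ℝ) := {x | ∀ i, ∃ z : ℤ, x i = (z : ℝ)}

/-- The `k`-fold Minkowski sum `A + A + ⋯ + A` (`k` times) of a subset `A` of `ℝ^n`
(by convention the `0`-fold sum is `{0}`). -/
def nsmulSet {n : ℕ} : ℕ → Set (Fin n → ℝ) → Set (Fin n → ℝ)
  | 0, _ => {0}
  | k + 1, A => A + nsmulSet k A

def latticeAddSubgroup (n : ℕ) : AddSubgroup (Fin n → ℝ) where
  carrier := latticePoints n
  zero_mem' i := ⟨0, by simp⟩
  add_mem' {x y} hx hy i := by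
    obtain ⟨a, ha⟩ := hx i
    obtain ⟨b, hb⟩ := hy i
    exact ⟨a + b, by simp [ha, hb]⟩
  neg_mem' {x} hx i := by
    obtain ⟨a, ha⟩ := hx i
    exact ⟨-a, by simp [ha]⟩

section

variable {E : Type*} [AddCommGroup E] [Module ℝ E]

theorem Convex.sum_mem_sum_smul {ι : Type*} {K : Set E} (hK : Convex ℝ K) {s : Finset ι}
    (hs : s.Nonempty) {c : ι → ℝ} {p : ι → E} (hc : ∀ i ∈ s, 0 ≤ c i)
    (hp : ∀ i ∈ s, p i ∈ c i • K) : ∑ i ∈ s, p i ∈ (∑ i ∈ s, c i) • K := by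
  induction hs using Finset.Nonempty.cons_induction with
  | singleton i => simpa using hp i (Finset.mem_singleton_self i)
  | cons i s hi hs ih =>
    simp only [Finset.forall_mem_cons, Finset.sum_cons] at hc hp ⊢
    rw [hK.add_smul hc.1 (Finset.sum_nonneg hc.2)]
    exact Set.add_mem_add hp.1 (ih hc.2 hp.2)

theorem exists_sub_mem_smul_convexHull [FiniteDimensional ℝ E] {S : Set E} {t : ℝ}
    (ht : Module.finrank ℝ E + 1 ≤ t) {x : E} (hx : x ∈ t • convexHull ℝ S) :
    ∃ v ∈ S, x - v ∈ (t - 1) • convexHull ℝ S := by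
  classical
  obtain ⟨y, hy, rfl⟩ := Set.mem_smul_set.1 hx
  obtain ⟨ι, _, z, w, hzS, hz, hw_pos, hw_sum, rfl⟩ := eq_pos_convex_span_of_mem_convexHull hy
  have hι : (Finset.univ : Finset ι).Nonempty :=
    Finset.nonempty_of_sum_ne_zero (hw_sum.symm ▸ one_ne_zero)
  have hcard : (Fintype.card ι : ℝ) ≤ Module.finrank ℝ E + 1 := by
    exact_mod_cast hz.card_le_finrank_succ.trans (by grw [Submodule.finrank_le])
  obtain ⟨j, -, hj⟩ : ∃ j ∈ Finset.univ, 1 ≤ t * w j := by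
    refine Finset.exists_le_of_sum_le hι ?_
    rw [← Finset.mul_sum, hw_sum, Finset.sum_const, Finset.card_univ]
    simp only [nsmul_eq_mul, mul_one]
    linarith
  set c : ι → ℝ := fun i => t * w i - (Pi.single j 1 : ι → ℝ) i
  have hc_sum : ∑ i, c i = t - 1 := by
    simp [c, Finset.sum_sub_distrib, ← Finset.mul_sum, hw_sum]
  have hxc : t • ∑ i, w i • z i - z j = ∑ i, c i • z i := by
    simp [c, sub_smul, Finset.sum_sub_distrib, Finset.smul_sum, smul_smul, Pi.single_apply]
  refine ⟨z j, hzS ⟨j, rfl⟩, ?_⟩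
  rw [hxc, ← hc_sum]
  refine (convex_convexHull ℝ S).sum_mem_sum_smul hι (fun i _ => ?_) fun i _ =>
    Set.smul_mem_smul_set (subset_convexHull ℝ S (hzS ⟨i, rfl⟩))
  by_cases hij : i = j
  · subst hij; simpa [c] using hj
  · simpa [c, Pi.single_apply, hij] using mul_nonneg (le_trans (by positivity) ht) (hw_pos i).le

end

theorem nsmulSet_inter_latticePoints_subset {n : ℕ} {K : Set (Fin n → ℝ)} (hK : Convex ℝ K)
    (hne : K.Nonempty) (k : ℕ) :
    nsmulSet k (K ∩ latticePoints n) ⊆ ((k : ℝ) • K) ∩ latticePoints n := by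
  induction k with
  | zero =>
    rintro x rfl
    exact ⟨by rw [Nat.cast_zero, Set.zero_smul_set hne]; rfl, (latticeAddSubgroup n).zero_mem⟩
  | succ k ih =>
    rintro _ ⟨a, ⟨haK, haL⟩, y, hy, rfl⟩
    obtain ⟨hyK, hyL⟩ := ih hy
    refine ⟨?_, (latticeAddSubgroup n).add_mem haL hyL⟩
    rw [Nat.cast_succ, add_comm, hK.add_smul zero_le_one k.cast_nonneg, one_smul]
    exact Set.add_mem_add haK hyK

theorem mem_smul_inter_add_nsmulSet {n : ℕ} {S : Set (Fin n → ℝ)} (hSL : S ⊆ latticePoints n)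
    (k : ℕ) {x : Fin n → ℝ} (hxL : x ∈ latticePoints n)
    (hx : x ∈ ((n + k : ℕ) : ℝ) • convexHull ℝ S) :
    x ∈ ((n : ℝ) • convexHull ℝ S ∩ latticePoints n) +
      nsmulSet k (convexHull ℝ S ∩ latticePoints n) := by
  induction k generalizing x with
  | zero => exact ⟨x, ⟨by simpa using hx, hxL⟩, 0, rfl, add_zero x⟩
  | succ k ih =>
    obtain ⟨v, hvS, hv⟩ := exists_sub_mem_smul_convexHull
      (by rw [Module.finrank_fin_fun]; exact_mod_cast (by omega : n + 1 ≤ n + (k + 1))) hx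
    have hvL : v ∈ latticePoints n := hSL hvS
    obtain ⟨z, hz, y, hy, hzy⟩ := ih ((latticeAddSubgroup n).sub_mem hxL hvL)
      (by convert hv using 2; push_cast; ring)
    refine ⟨z, hz, v + y, Set.add_mem_add ⟨subset_convexHull ℝ S hvS, hvL⟩ hy, ?_⟩
    change z + (v + y) = x
    rw [add_left_comm, show z + y = x - v from hzy, add_sub_cancel]

theorem dilate_inter_lattice_eq_general (n m : ℕ) (hm : n ≤ m) (S : Set (Fin n → ℝ))
    (hSL : S ⊆ latticePoints n)
    (K : Set (Fin n → ℝ)) (hK : K = convexHull ℝ S) :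
    ((m : ℝ) • K) ∩ latticePoints n =
      (((n : ℝ) • K) ∩ latticePoints n) + nsmulSet (m - n) (K ∩ latticePoints n) := by
  subst hK
  have hm' : m = n + (m - n) := (Nat.add_sub_cancel' hm).symm
  ext x
  constructor
  · rintro ⟨hx, hxL⟩
    exact mem_smul_inter_add_nsmulSet hSL (m - n) hxL (hm' ▸ hx)
  · rintro ⟨z, ⟨hz, hzL⟩, y, hy, rfl⟩
    have hconv := convex_convexHull ℝ S
    obtain ⟨hyK, hyL⟩ := nsmulSet_inter_latticePoints_subset hconv
      (Set.smul_set_nonempty.1 ⟨z, hz⟩) (m - n) hy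
    refine ⟨?_, (latticeAddSubgroup n).add_mem hzL hyL⟩
    rw [hm', Nat.cast_add, hconv.add_smul n.cast_nonneg (m - n).cast_nonneg]
    exact Set.add_mem_add hz hyK

/-- Let `S` be a finite subset of `ℤ^n`, `K` its convex hull in `ℝ^n`, and `m ≥ n`.
Then `mK ∩ ℤ^n = (nK ∩ ℤ^n) + (m - n)(K ∩ ℤ^n)`, where the right-hand side is a
Minkowski sum and `mK`, `nK` denote dilations. -/
theorem dilate_inter_lattice_eq (n m : ℕ) (hm : n ≤ m) (S : Set (Fin n → ℝ))
    (hSfin : S.Finite) (hSL : S ⊆ latticePoints n)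
    (K : Set (Fin n → ℝ)) (hK : K = convexHull ℝ S) :
    ((m : ℝ) • K) ∩ latticePoints n =
      (((n : ℝ) • K) ∩ latticePoints n) + nsmulSet (m - n) (K ∩ latticePoints n) :=
  dilate_inter_lattice_eq_general n m hm S hSL K hK
end

section
/- Let K ⊆ ℝ^n be an empty lattice simplex, with n ≥ 2. Then for every lattice point x ∈ nK, there exists a lattice point z ∈ K ∩ ℤ^n such that x − z ∈ (n−1)K. Equivalently, nK ∩ ℤ^n = ((n−1)K ∩ ℤ^n) + (K ∩ ℤ^n) as a Minkowski sum. -/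
open Pointwise

/-!
Write `x ∈ nK` as `∑ μ v • v` over the vertices `v` of `K`, with `μ ≥ 0` and `∑ μ v = n`.
If some `μ v ≥ 1`, the weights `μ - δ_v` exhibit `x - v ∈ (n - 1)K`. Otherwise `K` must have
`n + 1` vertices, and `y = ∑ v - x = ∑ (1 - μ v) • v` is a lattice point of `K`, hence a vertex
`v₀` since `K` is empty. By uniqueness of barycentric coordinates, `1 - μ v = 0` for every
`v ≠ v₀`, contradicting `μ v < 1`.
-/

open Finset

lemma latticePoints_eq_pi (n : ℕ) :
    latticePoints n = AddSubgroup.pi Set.univ fun _ : Fin n => (Int.castAddHom ℝ).range := by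
  ext x
  simp [latticePoints, AddSubgroup.mem_pi, AddSubgroup.mem_zmultiples_iff, eq_comm]

lemma AffineIndependent.card_le_finrank_add_one {k V P ι : Type*} [DivisionRing k]
    [AddCommGroup V] [Module k V] [AddTorsor V P] [FiniteDimensional k V] [Fintype ι] {p : ι → P}
    (hp : AffineIndependent k p) : Fintype.card ι ≤ Module.finrank k V + 1 :=
  hp.card_le_finrank_succ.trans (Nat.add_le_add_right (Submodule.finrank_le _) 1)

section

variable {𝕜 E : Type*} [Field 𝕜] [LinearOrder 𝕜] [IsStrictOrderedRing 𝕜] [AddCommGroup E]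
  [Module 𝕜 E]

lemma Finset.mem_smul_convexHull_iff {t : Finset E} {c : 𝕜} (hc : 0 < c) {x : E} :
    x ∈ c • convexHull 𝕜 (t : Set E) ↔
      ∃ μ : E → 𝕜, (∀ v ∈ t, 0 ≤ μ v) ∧ ∑ v ∈ t, μ v = c ∧ ∑ v ∈ t, μ v • v = x := by
  rw [Set.mem_smul_set_iff_inv_smul_mem₀ hc.ne', Finset.mem_convexHull']
  constructor
  · rintro ⟨w, hw0, hw1, hwx⟩
    refine ⟨fun v => c * w v, fun v hv => mul_nonneg hc.le (hw0 v hv), by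
      rw [← mul_sum, hw1, mul_one], ?_⟩
    simp_rw [mul_smul, ← smul_sum, hwx, smul_inv_smul₀ hc.ne']
  · rintro ⟨μ, hμ0, hμc, rfl⟩
    refine ⟨fun v => c⁻¹ * μ v, fun v hv => mul_nonneg (inv_nonneg.2 hc.le) (hμ0 v hv), by
      rw [← mul_sum, hμc, inv_mul_cancel₀ hc.ne'], ?_⟩
    simp_rw [mul_smul, ← smul_sum]

lemma AffineIndependent.exists_one_le_weight {t : Finset E}
    (hind : AffineIndependent 𝕜 ((↑) : t → E)) (L : AddSubgroup E) {m : ℕ} (hm : 0 < m)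
    (hcard : #t ≤ m + 1) (htL : (t : Set E) ⊆ L)
    (hempty : convexHull 𝕜 (t : Set E) ∩ L ⊆ (convexHull 𝕜 (t : Set E)).extremePoints 𝕜)
    {μ : E → 𝕜} (hμsum : ∑ v ∈ t, μ v = m) (hμL : ∑ v ∈ t, μ v • v ∈ L) :
    ∃ v ∈ t, 1 ≤ μ v := by
  classical
  by_contra! hlt
  have ht : t.Nonempty := nonempty_of_sum_ne_zero (hμsum ▸ Nat.cast_ne_zero.2 hm.ne')
  have hcard_eq : #t = m + 1 := by
    have : (m : 𝕜) < #t :=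
      calc (m : 𝕜) = ∑ v ∈ t, μ v := hμsum.symm
        _ < ∑ v ∈ t, (1 : 𝕜) := sum_lt_sum_of_nonempty ht hlt
        _ = #t := by simp
    have : m < #t := by exact_mod_cast this
    omega
  set y := ∑ v ∈ t, (1 - μ v) • v with hy
  have hyK : y ∈ convexHull 𝕜 (t : Set E) :=
    mem_convexHull'.2 ⟨_, fun v hv => sub_nonneg.2 (hlt v hv).le,
      by simp [sum_sub_distrib, hμsum, hcard_eq], rfl⟩
  have hy_sub : y = ∑ v ∈ t, v - ∑ v ∈ t, μ v • v := by
    simp [y, sub_smul, sum_sub_distrib]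
  have hyL : y ∈ L := hy_sub ▸ L.sub_mem (L.sum_mem fun v hv => htL hv) hμL
  have hyt : y ∈ t := extremePoints_convexHull_subset (hempty ⟨hyK, hyL⟩)
  have hcoord := hind.eq_of_sum_eq_sum_subtype (w₁ := fun v => 1 - μ v)
    (w₂ := fun v => if v = y then 1 else 0) (by simp [sum_sub_distrib, hμsum, hcard_eq, hyt])
    (by simp [← hy, hyt])
  obtain ⟨u, hu, huy⟩ := exists_mem_ne (by omega : 1 < #t) y
  have hμu := hcoord u hu
  simp only [huy, if_false, sub_eq_zero] at hμu
  exact (hlt u hu).ne hμu.symm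

theorem AffineIndependent.add_one_smul_convexHull_inter_eq_add {t : Finset E}
    (hind : AffineIndependent 𝕜 ((↑) : t → E)) (L : AddSubgroup E) {m : ℕ} (hm : 0 < m)
    (hcard : #t ≤ m + 2) (htL : (t : Set E) ⊆ L)
    (hempty : convexHull 𝕜 (t : Set E) ∩ L ⊆ (convexHull 𝕜 (t : Set E)).extremePoints 𝕜) :
    ((m + 1 : 𝕜) • convexHull 𝕜 (t : Set E)) ∩ L =
      ((m : 𝕜) • convexHull 𝕜 (t : Set E)) ∩ L + convexHull 𝕜 (t : Set E) ∩ L := by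
  classical
  apply Set.Subset.antisymm
  · rintro x ⟨hxK, hxL⟩
    obtain ⟨μ, hμ0, hμsum, rfl⟩ := (mem_smul_convexHull_iff (by positivity)).1 hxK
    obtain ⟨v, hv, hv1⟩ := hind.exists_one_le_weight (m := m + 1) L (by omega) hcard htL hempty
      (by push_cast; exact hμsum) hxL
    refine ⟨_, ⟨?_, L.sub_mem hxL (htL hv)⟩, v, ⟨subset_convexHull 𝕜 _ hv, htL hv⟩,
      sub_add_cancel _ v⟩
    refine (mem_smul_convexHull_iff (Nat.cast_pos.2 hm)).2
      ⟨fun u => μ u - if u = v then 1 else 0, fun u hu => ?_, ?_, ?_⟩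
    · dsimp only
      split_ifs with huv
      · exact sub_nonneg.2 (huv ▸ hv1)
      · simpa using hμ0 u hu
    · simp [sum_sub_distrib, hμsum, hv]
    · simp [sub_smul, sum_sub_distrib, hv]
  · rintro _ ⟨a, ⟨ha, haL⟩, b, ⟨hb, hbL⟩, rfl⟩
    refine ⟨?_, L.add_mem haL hbL⟩
    rw [(convex_convexHull 𝕜 _).add_smul (Nat.cast_nonneg m) zero_le_one, one_smul]
    exact Set.add_mem_add ha hb

end

/-- Let `K ⊆ ℝ^n` be an empty lattice simplex (the convex hull of a finite affinely
independent set of lattice points, containing no lattice points other than its extreme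
points), with `n ≥ 2`.  Then `nK ∩ ℤ^n = ((n-1)K ∩ ℤ^n) + (K ∩ ℤ^n)` (Minkowski sum),
i.e. every lattice point `x ∈ nK` is of the form `z + w` with `z ∈ (n-1)K` a lattice point
and `w ∈ K ∩ ℤ^n`. -/
theorem empty_simplex_decomposition (n : ℕ) (hn : 2 ≤ n)
    (S : Set (Fin n → ℝ)) (hSfin : S.Finite) (hSL : S ⊆ latticePoints n)
    (hind : AffineIndependent ℝ ((↑) : S → (Fin n → ℝ)))
    (K : Set (Fin n → ℝ)) (hK : K = convexHull ℝ S)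
    (hempty : K ∩ latticePoints n = K.extremePoints ℝ) :
    ((n : ℝ) • K) ∩ latticePoints n =
      ((((n - 1 : ℕ)) : ℝ) • K) ∩ latticePoints n + (K ∩ latticePoints n) := by
  obtain ⟨t, rfl⟩ := hSfin.exists_finset_coe
  obtain ⟨m, rfl⟩ : ∃ m, n = m + 1 := ⟨n - 1, by omega⟩
  have hcard : #t ≤ m + 2 := by simpa using hind.card_le_finrank_add_one
  subst hK
  rw [latticePoints_eq_pi] at hSL hempty ⊢
  simpa using hind.add_one_smul_convexHull_inter_eq_add _ (by omega) hcard hSL hempty.subset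
end

section
/- Let n ≥ 4, let d and a(1), ..., a(n−1) be integers with 0 < a(i) < d for every i and Σ_{i=1}^{n−1} a(i) < d, and let a = (a(1), ..., a(n−1), d)^T ∈ ℤ^n. Let K be the convex hull in ℝ^n of S = {0, e_1, ..., e_{n−1}, a}, where e_1, ..., e_{n−1} are the first n−1 standard basis vectors. Then K is a lattice simplex with nonempty interior, and the all-ones vector 𝟏 = (1, 1, ..., 1)^T satisfies 𝟏 ∈ (n−1)K and 𝟏 ∉ (n−2)K. -/
/-! The nonzero vertices `e_1, …, e_{n-1}, a` of `K` form a basis `b` of `ℝⁿ` (their matrix is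
triangular with diagonal `1, …, 1, d`). Hence `K` is a simplex with a vertex at the origin, and a
point with nonnegative `b`-coordinates lies in `tK` exactly when these coordinates sum to at most
`t`, since the sum of the coordinates is the linear functional equal to `1` at every `b i`.
The coordinates of `𝟏` are `1 - a(i)/d` and `1/d`, which are nonnegative and sum to
`(n - 1) + (1 - Σ a(i))/d`; this lies in `(n - 2, n - 1]` because `1 ≤ Σ a(i) < d`. -/

open Pointwise Set

namespace Module.Basis

variable {ι E : Type*} [AddCommGroup E] [Module ℝ E] (b : Basis ι ℝ E)

theorem affineIndependent_insert_zero :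
    AffineIndependent ℝ ((↑) : (insert 0 (range b) : Set E) → E) := by
  have h := (linearIndependent_set_iff_affineIndependent_vadd_union_singleton ℝ
    (s := range b) (by rintro _ ⟨i, rfl⟩; exact b.ne_zero i) (0 : E)).1
    ((linearIndepOn_id_range_iff b.injective).2 b.linearIndependent)
  have himage : (fun v => v +ᵥ (0 : E)) '' range b = range b := by simp
  rwa [himage, singleton_union] at h

theorem sumCoords_le_one_of_mem_convexHull {x : E}
    (hx : x ∈ convexHull ℝ (insert 0 (range b))) : b.sumCoords x ≤ 1 := by
  refine convexHull_min ?_ ?_ hx (t := {y | b.sumCoords y ≤ 1})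
  · rintro _ (rfl | ⟨i, rfl⟩) <;> simp
  · exact convex_halfSpace_le b.sumCoords.isLinear 1

theorem sum_smul_mem_convexHull_insert_zero [Fintype ι] {w : ι → ℝ} (hw : 0 ≤ w)
    (hsum : ∑ i, w i ≤ 1) : ∑ i, w i • b i ∈ convexHull ℝ (insert 0 (range b)) := by
  have h := (convex_convexHull ℝ (insert 0 (range b))).sum_mem (t := Finset.univ)
    (w := fun o : Option ι => o.elim (1 - ∑ i, w i) w)
    (z := fun o : Option ι => o.elim 0 b)
    (by rintro (_ | i) -; exacts [sub_nonneg.2 hsum, hw i])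
    (by simp [Fintype.sum_option])
    (by rintro (_ | i) - <;> exact subset_convexHull ℝ _ (by simp))
  simpa [Fintype.sum_option] using h

theorem mem_smul_convexHull_insert_zero_iff [Fintype ι] {w : ι → ℝ} {x : E}
    (hx : ∑ i, w i • b i = x) (hw : 0 ≤ w) {t : ℝ} (ht : 0 < t) :
    x ∈ t • convexHull ℝ (insert 0 (range b)) ↔ ∑ i, w i ≤ t := by
  have hsumCoords : b.sumCoords x = ∑ i, w i := by simp [← hx]
  constructor
  · rintro ⟨y, hy, rfl⟩
    have := b.sumCoords_le_one_of_mem_convexHull hy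
    rw [← hsumCoords, map_smul, smul_eq_mul]
    nlinarith
  · intro hsum
    refine ⟨∑ i, (t⁻¹ * w i) • b i, b.sum_smul_mem_convexHull_insert_zero
      (fun i => mul_nonneg (inv_nonneg.2 ht.le) (hw i)) ?_, ?_⟩
    · rw [← Finset.mul_sum]
      exact (inv_mul_le_one₀ ht).2 hsum
    · simp [Finset.smul_sum, smul_smul, ht.ne', ← hx]

end Module.Basis

theorem Module.Basis.interior_convexHull_insert_zero_nonempty {ι E : Type*} [Finite ι]
    [NormedAddCommGroup E] [NormedSpace ℝ E] (b : Basis ι ℝ E) :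
    (interior (convexHull ℝ (insert 0 (range b)))).Nonempty := by
  have := b.finiteDimensional_of_finite
  rw [interior_convexHull_nonempty_iff_affineSpan_eq_top, ← AffineSubspace.coe_eq_univ_iff,
    affineSpan_insert_zero, b.span_eq, Submodule.top_coe]

theorem Fin.val_lt_sub_one_iff_ne {n : ℕ} (h : n - 1 < n) (i : Fin n) :
    (i : ℕ) < n - 1 ↔ i ≠ ⟨n - 1, h⟩ := by
  rw [Ne, Fin.ext_iff]
  change _ ↔ ¬ (i : ℕ) = n - 1
  omega

section UpdateStdBasis

variable {ι : Type*} [DecidableEq ι] (l : ι) (v : ι → ℝ)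

def updateStdBasis : ι → ι → ℝ := Function.update (fun i => Pi.single i 1) l v

@[simp]
theorem updateStdBasis_self : updateStdBasis l v l = v := by simp [updateStdBasis]

@[simp]
theorem updateStdBasis_of_ne {i : ι} (hi : i ≠ l) : updateStdBasis l v i = Pi.single i 1 := by
  simp [updateStdBasis, hi]

theorem range_updateStdBasis :
    range (updateStdBasis l v) = {x | ∃ i ≠ l, x = Pi.single i 1} ∪ {v} := by
  ext x
  constructor
  · rintro ⟨i, rfl⟩
    by_cases hi : i = l
    · simp [hi]
    · exact Or.inl ⟨i, hi, by simp [hi]⟩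
  · rintro (⟨i, hi, rfl⟩ | rfl)
    · exact ⟨i, by simp [hi]⟩
    · exact ⟨l, by simp⟩

noncomputable def oneCoeffs : ι → ℝ := Function.update (fun i => 1 - v i / v l) l (1 / v l)

theorem oneCoeffs_nonneg (hvl : 0 < v l) (hv : ∀ i ≠ l, v i ≤ v l) : 0 ≤ oneCoeffs l v :=
  fun i => by
    by_cases hi : i = l
    · simp [oneCoeffs, hi, hvl.le]
    · simpa [oneCoeffs, Function.update_of_ne hi] using (div_le_one hvl).2 (hv i hi)

variable [Fintype ι]

theorem sum_smul_updateStdBasis_apply (w : ι → ℝ) (j : ι) :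
    (∑ i, w i • updateStdBasis l v i) j = if j = l then w l * v l else w j + w l * v j := by
  rw [Finset.sum_apply, ← Finset.add_sum_erase _ _ (Finset.mem_univ l)]
  split_ifs with hj
  · subst hj
    rw [Finset.sum_eq_zero fun i hi => by simp [Finset.ne_of_mem_erase hi]]
    simp
  · rw [Finset.sum_eq_single_of_mem j (Finset.mem_erase.2 ⟨hj, Finset.mem_univ j⟩)
      fun i hi hij => by simp [Finset.ne_of_mem_erase hi, Ne.symm hij]]
    simp only [updateStdBasis_self, Pi.smul_apply, smul_eq_mul, updateStdBasis_of_ne l v hj,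
      Pi.single_eq_same, mul_one]
    ring

theorem linearIndependent_updateStdBasis (hv : v l ≠ 0) :
    LinearIndependent ℝ (updateStdBasis l v) := by
  refine Fintype.linearIndependent_iff.2 fun w hw j => ?_
  have hcoord := fun j => congrFun hw j
  simp only [sum_smul_updateStdBasis_apply, Pi.zero_apply] at hcoord
  have hwl : w l = 0 := by simpa [hv] using hcoord l
  by_cases hj : j = l
  · rwa [hj]
  · simpa [hj, hwl] using hcoord j

theorem exists_basis_coe_eq_updateStdBasis (hv : v l ≠ 0) :
    ∃ b : Module.Basis ι ℝ (ι → ℝ), ⇑b = updateStdBasis l v :=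
  have : Nonempty ι := ⟨l⟩
  ⟨basisOfLinearIndependentOfCardEqFinrank (linearIndependent_updateStdBasis l v hv)
    (Module.finrank_fintype_fun_eq_card ℝ).symm, coe_basisOfLinearIndependentOfCardEqFinrank _ _⟩

theorem sum_oneCoeffs_smul_updateStdBasis (hv : v l ≠ 0) :
    ∑ i, oneCoeffs l v i • updateStdBasis l v i = fun _ => 1 := by
  ext j
  rw [sum_smul_updateStdBasis_apply]
  split_ifs with hj
  · simp [oneCoeffs, hv]
  · simp only [oneCoeffs, Function.update_self, Function.update_of_ne hj]
    field_simp
    ring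

theorem sum_oneCoeffs (hv : v l ≠ 0) :
    ∑ i, oneCoeffs l v i = (Fintype.card ι - 1) + (1 - ∑ i ∈ Finset.univ.erase l, v i) / v l := by
  rw [oneCoeffs, Finset.sum_update_of_mem (Finset.mem_univ l), Finset.sdiff_singleton_eq_erase,
    Finset.sum_sub_distrib, ← Finset.sum_div, Finset.sum_const,
    Finset.card_erase_of_mem (Finset.mem_univ l), Finset.card_univ, nsmul_eq_mul, mul_one,
    Nat.cast_sub (Fintype.card_pos_iff.2 ⟨l⟩)]
  field_simp
  ring

theorem one_mem_smul_convexHull_updateStdBasis_iff (hvl : 0 < v l) (hv : ∀ i ≠ l, v i ≤ v l)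
    {t : ℝ} (ht : 0 < t) :
    (fun _ => (1 : ℝ)) ∈ t • convexHull ℝ (insert 0 (range (updateStdBasis l v))) ↔
      (Fintype.card ι - 1) + (1 - ∑ i ∈ Finset.univ.erase l, v i) / v l ≤ t := by
  obtain ⟨b, hb⟩ := exists_basis_coe_eq_updateStdBasis l v hvl.ne'
  rw [← hb, b.mem_smul_convexHull_insert_zero_iff
    (hb ▸ sum_oneCoeffs_smul_updateStdBasis l v hvl.ne') (oneCoeffs_nonneg l v hvl hv) ht,
    sum_oneCoeffs l v hvl.ne']

end UpdateStdBasis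

/-- Let `n ≥ 4`, let `d` and `a 0, …, a (n-2)` be integers with `0 < a i < d` for every
`i < n - 1` and `∑_{i < n-1} a i < d`, and let the last coordinate of `a` be `d`.
Let `K` be the convex hull in `ℝ^n` of `S = {0, e_1, …, e_{n-1}, a}` where the `e i` are
the first `n - 1` standard basis vectors.  Then `K` is a lattice simplex (its vertex set
`S` is affinely independent) with nonempty interior, and the all-ones vector `𝟏` lies in
`(n-1)K` but not in `(n-2)K`. -/
theorem example4 (n : ℕ) (hn : 4 ≤ n) (d : ℤ) (a : Fin n → ℤ)
    (ha : ∀ i : Fin n, (i : ℕ) < n - 1 → 0 < a i ∧ a i < d)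
    (hlast : a ⟨n - 1, by omega⟩ = d)
    (hsum : ∑ i ∈ Finset.univ.filter (fun i : Fin n => (i : ℕ) < n - 1), a i < d)
    (S : Set (Fin n → ℝ))
    (hS : S = {0} ∪ {x | ∃ i : Fin n, (i : ℕ) < n - 1 ∧ x = Pi.single i 1} ∪
      {fun i => (a i : ℝ)})
    (K : Set (Fin n → ℝ)) (hK : K = convexHull ℝ S) :
    AffineIndependent ℝ ((↑) : S → (Fin n → ℝ)) ∧
    (interior K).Nonempty ∧
    (fun _ => (1 : ℝ)) ∈ ((n - 1 : ℕ) : ℝ) • K ∧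
    (fun _ => (1 : ℝ)) ∉ ((n - 2 : ℕ) : ℝ) • K := by
  set l : Fin n := ⟨n - 1, by omega⟩
  have hlt_iff : ∀ i : Fin n, (i : ℕ) < n - 1 ↔ i ≠ l := Fin.val_lt_sub_one_iff_ne _
  set v : Fin n → ℝ := fun i => (a i : ℝ)
  have hvl : v l = d := congrArg Int.cast hlast
  have hv : ∀ i ≠ l, v i ≤ v l := fun i hi => by
    simpa [v, hvl] using (ha i ((hlt_iff i).2 hi)).2.le
  set A := ∑ i ∈ Finset.univ.filter (fun i : Fin n => (i : ℕ) < n - 1), a i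
  have hA_pos : 0 < A := Finset.sum_pos (fun i hi => (ha i (Finset.mem_filter.1 hi).2).1)
    ⟨⟨0, by omega⟩, Finset.mem_filter.2 ⟨Finset.mem_univ _, show 0 < n - 1 by omega⟩⟩
  have hA : ∑ i ∈ Finset.univ.erase l, v i = A := by
    simp only [A, hlt_iff, v, Int.cast_sum, Finset.filter_ne']
  have hd : (0 : ℝ) < d := by exact_mod_cast hA_pos.trans hsum
  have hA_ge : (1 : ℝ) ≤ A := by exact_mod_cast hA_pos
  have hA_lt : (A : ℝ) < d := by exact_mod_cast hsum
  have hfrac_nonpos : (1 - A) / (d : ℝ) ≤ 0 :=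
    div_nonpos_of_nonpos_of_nonneg (by linarith) hd.le
  have hfrac_gt : -1 < (1 - A) / (d : ℝ) := by rw [lt_div_iff₀ hd]; linarith
  obtain ⟨b, hb⟩ := exists_basis_coe_eq_updateStdBasis l v (hvl ▸ hd.ne')
  have hSb : S = insert 0 (range b) := by
    simp only [hS, hb, range_updateStdBasis, hlt_iff, singleton_union, insert_union]
  subst hK
  rw [hSb]
  refine ⟨b.affineIndependent_insert_zero, b.interior_convexHull_insert_zero_nonempty, ?_, ?_⟩
  all_goals
    rw [hb, one_mem_smul_convexHull_updateStdBasis_iff l v (hvl ▸ hd) hv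
      (Nat.cast_pos.2 (by omega)), Fintype.card_fin, hvl, hA, Nat.cast_sub (by omega)]
    push_cast [not_le]
    linarith
end

section
/- Let K be a projectively faithful lattice polytope in ℝ^n. If there exists an integer m ≥ n−1 such that mK ∩ ℤ^n = m·(K ∩ ℤ^n), then for all but finitely many positive integers m' (in fact for all m' ≥ m) one has m'K ∩ ℤ^n = m'·(K ∩ ℤ^n). -/
/-!
For `k ≥ n - 1` every lattice point `z` of `(k+1)K` is a lattice point of `K` plus a lattice point
of `kK`, and the theorem follows by induction on `m'`. By Carathéodory, `z = ∑ λᵢ vᵢ` with affinely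
independent lattice vertices `vᵢ` of `K`, `λᵢ > 0` and `∑ λᵢ = k + 1`. If some `λᵢ ≥ 1`, subtract
`vᵢ`. Otherwise there are `n + 1` vertices and `k + 1 = n`, so `q = ∑ vᵢ - z = ∑ (1 - λᵢ) vᵢ` is a
lattice point of the simplex. Replacing a suitable vertex `vⱼ` by `q` (a stellar subdivision)
gives a lattice simplex that still has `z` in its `(k+1)`-dilate but no longer contains `vⱼ`, so
we may induct on the number of lattice points of the simplex.
-/

open Pointwise

/-- A lattice polytope in `ℝ^n`: the convex hull of a finite nonempty set of lattice points. -/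
def IsLatticePolytope {n : ℕ} (K : Set (Fin n → ℝ)) : Prop :=
  ∃ S : Set (Fin n → ℝ), S.Finite ∧ S.Nonempty ∧ S ⊆ latticePoints n ∧ K = convexHull ℝ S

/-- A lattice polytope is projectively faithful if the differences of its lattice points
generate the full lattice `ℤ^n` as an abelian group. -/
def ProjectivelyFaithful {n : ℕ} (K : Set (Fin n → ℝ)) : Prop :=
  (AddSubgroup.closure ((K ∩ latticePoints n) - (K ∩ latticePoints n)) :
    Set (Fin n → ℝ)) = latticePoints n

/-- The lattice cone `C_v = ⋃_{m ≥ 1} m((K - v) ∩ ℤ^n)` at a point `v`, where `m(⬝)` is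
the `m`-fold Minkowski sum. -/
def latticeCone {n : ℕ} (K : Set (Fin n → ℝ)) (v : Fin n → ℝ) : Set (Fin n → ℝ) :=
  ⋃ (m : ℕ) (_ : 1 ≤ m), nsmulSet m (((fun x => x - v) '' K) ∩ latticePoints n)

/-- `C_v` is unperforated: any lattice point with a positive multiple in `C_v` is itself
in `C_v`. -/
def Unperforated {n : ℕ} (C : Set (Fin n → ℝ)) : Prop :=
  ∀ x ∈ latticePoints n, ∀ m : ℕ, 0 < m → (m : ℝ) • x ∈ C → x ∈ C

/-- A lattice polytope is locally solid if the cone `C_v` is unperforated for every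
extreme point `v` of `K`. -/
def LocallySolid {n : ℕ} (K : Set (Fin n → ℝ)) : Prop :=
  ∀ v ∈ K.extremePoints ℝ, Unperforated (latticeCone K v)

open Finset

section ConvexCombination

variable {ι E : Type*} [AddCommGroup E] [Module ℝ E]

theorem sum_smul_mem_smul_convexHull {s : Set E} (hs : s.Nonempty) {t : Finset ι}
    {w : ι → ℝ} {p : ι → E} (hw : ∀ i ∈ t, 0 ≤ w i) (hp : ∀ i ∈ t, p i ∈ s) :
    ∑ i ∈ t, w i • p i ∈ (∑ i ∈ t, w i) • convexHull ℝ s := by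
  rcases (sum_nonneg hw).eq_or_lt with h | h
  · have hw0 : ∀ i ∈ t, w i = 0 := (sum_eq_zero_iff_of_nonneg hw).1 h.symm
    rw [← h, Set.zero_smul_set (hs.mono (subset_convexHull ℝ s)),
      sum_eq_zero fun i hi => by rw [hw0 i hi, zero_smul]]
    rfl
  · have := Set.smul_mem_smul_set (a := ∑ i ∈ t, w i) (t.centerMass_mem_convexHull hw h hp)
    rwa [Finset.centerMass, smul_inv_smul₀ h.ne'] at this

theorem sum_smul_update [Fintype ι] [DecidableEq ι] (a : ι → ℝ) (v : ι → E) (j : ι) (x : E) :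
    ∑ i, a i • Function.update v j x i = ∑ i, a i • v i + a j • (x - v j) := by
  rw [← sub_eq_iff_eq_add', ← sum_sub_distrib]
  have h : ∀ i, a i • Function.update v j x i - a i • v i =
      if i = j then a j • (x - v j) else 0 := by
    intro i; by_cases hi : i = j <;> simp [hi, smul_sub]
  simp only [h, sum_ite_eq', mem_univ, if_true]

theorem sum_smul_sub_mem_smul_convexHull [Fintype ι] [DecidableEq ι] {lam : ι → ℝ} {v : ι → E}
    (h0 : ∀ i, 0 ≤ lam i) {i : ι} (hi : 1 ≤ lam i) :
    ∑ t, lam t • v t - v i ∈ (∑ t, lam t - 1) • convexHull ℝ (Set.range v) := by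
  set a : ι → ℝ := fun t => lam t - if t = i then 1 else 0
  have ha : ∀ t, 0 ≤ a t := by
    intro t
    by_cases h : t = i
    · simp [a, h, hi]
    · simp [a, h, h0 t]
  have hcomb : ∑ t, a t • v t = ∑ t, lam t • v t - v i := by
    simp [a, sub_smul, ite_smul, sum_sub_distrib]
  have hsum : ∑ t, a t = ∑ t, lam t - 1 := by simp [a, sum_sub_distrib]
  rw [← hcomb, ← hsum]
  exact sum_smul_mem_smul_convexHull (Set.range_nonempty_iff_nonempty.2 ⟨i⟩) (fun t _ => ha t)
    (fun t _ => Set.mem_range_self t)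

end ConvexCombination

section Stellar

variable {ι E : Type*} [Fintype ι] [DecidableEq ι] [AddCommGroup E] [Module ℝ E]

theorem AffineBasis.exists_mem_smul_convexHull_update (b : AffineBasis ι ℝ E) {lam : ι → ℝ}
    (hpos : ∀ i, 0 < lam i) (hlt : ∀ i, lam i < 1) (hsum : ∑ i, (1 - lam i) = 1) :
    ∃ j, ∑ i, lam i • b i ∈
        (∑ i, lam i) • convexHull ℝ (Set.range (Function.update b j (∑ i, (1 - lam i) • b i))) ∧
      b j ∉ convexHull ℝ (Set.range (Function.update b j (∑ i, (1 - lam i) • b i))) := by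
  set ν : ι → ℝ := fun i => 1 - lam i
  set q := ∑ i, ν i • b i
  have hν : ∀ i, 0 < ν i := fun i => sub_pos.2 (hlt i)
  have := b.nonempty
  -- Minimality of `lam j / ν j` keeps the coefficients `μ` of `∑ lam i • b i` nonnegative.
  obtain ⟨j, -, hj⟩ := exists_min_image univ (fun i => lam i / ν i) univ_nonempty
  set r := lam j / ν j
  have hr : 0 ≤ r := div_nonneg (hpos j).le (hν j).le
  have hrν : ∀ i, r * ν i ≤ lam i := fun i => (le_div_iff₀ (hν i)).1 (hj i (mem_univ i))
  refine ⟨j, ?_, ?_⟩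
  · set μ : ι → ℝ := fun i => lam i - r * ν i + if i = j then r else 0
    have hμj : μ j = r := by simp [μ, r, div_mul_cancel₀ _ (hν j).ne']
    have hμ : ∀ i, 0 ≤ μ i := by
      intro i
      by_cases h : i = j
      · rw [h, hμj]; exact hr
      · simp only [μ, h, if_false, add_zero, sub_nonneg, hrν]
    have hμsum : ∑ i, μ i = ∑ i, lam i := by
      simp only [μ, sum_add_distrib, sum_sub_distrib, ← mul_sum, hsum, ν, sum_ite_eq',
        mem_univ, if_true, mul_one, sub_add_cancel]
    have hcomb : ∑ i, μ i • Function.update b j q i = ∑ i, lam i • b i := by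
      rw [sum_smul_update, hμj]
      simp only [μ, add_smul, sub_smul, mul_smul, ite_smul, zero_smul, sum_add_distrib,
        sum_sub_distrib, ← smul_sum, sum_ite_eq', mem_univ, if_true, q]
      module
    rw [← hcomb, ← hμsum]
    exact sum_smul_mem_smul_convexHull (Set.range_nonempty _) (fun i _ => hμ i)
      (fun i _ => Set.mem_range_self i)
  -- On the new hull the barycentric coordinate at `j` is at most `ν j < 1`; at `b j` it is `1`.
  · have hq : b.coord j q = ν j := by
      show b.coord j (∑ i, ν i • b i) = ν j
      rw [← affineCombination_eq_linear_combination _ _ _ hsum,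
        b.coord_apply_combination_of_mem (mem_univ j) hsum]
    have hsub :
        convexHull ℝ (Set.range (Function.update b j q)) ⊆ b.coord j ⁻¹' Set.Iic (ν j) := by
      refine convexHull_min ?_ ((convex_Iic _).affine_preimage _)
      rintro _ ⟨i, rfl⟩
      by_cases h : i = j
      · subst h; simp [hq]
      · simp [h, b.coord_apply_ne (Ne.symm h), (hν j).le]
    intro hmem
    have := hsub hmem
    simp only [Set.mem_preimage, Set.mem_Iic, b.coord_apply_eq, ν] at this
    linarith [hpos j]

end Stellar

section Lattice

variable {n : ℕ}

theorem latticePoints_eq_span (n : ℕ) :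
    latticePoints n = (Submodule.span ℤ (Set.range (Pi.basisFun ℝ (Fin n))) : Set (Fin n → ℝ)) := by
  ext x
  rw [SetLike.mem_coe, Module.Basis.mem_span_iff_repr_mem]
  simp [latticePoints, eq_comm]

theorem Bornology.IsBounded.finite_inter_latticePoints {s : Set (Fin n → ℝ)}
    (hs : Bornology.IsBounded s) : (s ∩ latticePoints n).Finite := by
  rw [latticePoints_eq_span]
  exact ZSpan.setFinite_inter _ hs

theorem add_mem_latticePoints {x y : Fin n → ℝ} (hx : x ∈ latticePoints n)
    (hy : y ∈ latticePoints n) : x + y ∈ latticePoints n := by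
  rw [latticePoints_eq_span] at *
  exact add_mem hx hy

theorem sub_mem_latticePoints {x y : Fin n → ℝ} (hx : x ∈ latticePoints n)
    (hy : y ∈ latticePoints n) : x - y ∈ latticePoints n := by
  rw [latticePoints_eq_span] at *
  exact sub_mem hx hy

theorem sum_mem_latticePoints {ι : Type*} {s : Finset ι} {f : ι → Fin n → ℝ}
    (hf : ∀ i ∈ s, f i ∈ latticePoints n) : ∑ i ∈ s, f i ∈ latticePoints n := by
  rw [latticePoints_eq_span] at *
  exact sum_mem hf

theorem AffineIndependent.card_eq_finrank_add_one_of_lt_one {ι E : Type*} [Fintype ι]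
    [AddCommGroup E] [Module ℝ E] [FiniteDimensional ℝ E] {v : ι → E} (hAI : AffineIndependent ℝ v)
    {lam : ι → ℝ} (hlt : ∀ i, lam i < 1) {c : ℕ} (hc : Module.finrank ℝ E ≤ c + 1)
    (hlam : ∑ i, lam i = c + 1) :
    Fintype.card ι = Module.finrank ℝ E + 1 ∧ c + 1 = Module.finrank ℝ E := by
  have hne : Nonempty ι := by
    by_contra h
    rw [not_nonempty_iff] at h
    simp only [univ_eq_empty, sum_empty] at hlam
    linarith [(c.cast_nonneg : (0 : ℝ) ≤ c)]
  have hcard_le : Fintype.card ι ≤ Module.finrank ℝ E + 1 :=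
    hAI.card_le_finrank_succ.trans (Nat.succ_le_succ (Submodule.finrank_le _))
  have hcard_gt : ((c + 1 : ℕ) : ℝ) < Fintype.card ι := calc
    ((c + 1 : ℕ) : ℝ) = ∑ i, lam i := by rw [hlam]; push_cast; ring
    _ < ∑ _i : ι, (1 : ℝ) := sum_lt_sum_of_nonempty univ_nonempty fun i _ => hlt i
    _ = Fintype.card ι := by simp
  have : c + 1 < Fintype.card ι := by exact_mod_cast hcard_gt
  omega

theorem exists_subset_convexHull_of_coeffs_lt_one {ι : Type*} [Fintype ι] {v : ι → Fin n → ℝ}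
    (hAI : AffineIndependent ℝ v) (hvlat : ∀ i, v i ∈ latticePoints n) {lam : ι → ℝ}
    (hpos : ∀ i, 0 < lam i) (hlt : ∀ i, lam i < 1) {c : ℕ} (hc : n ≤ c + 1)
    (hlam : ∑ i, lam i = c + 1) (hzlat : ∑ i, lam i • v i ∈ latticePoints n) :
    ∃ T ⊆ convexHull ℝ (Set.range v), T.Finite ∧ T ⊆ latticePoints n ∧
      (∃ j, v j ∉ convexHull ℝ T) ∧ ∑ i, lam i • v i ∈ ((c : ℝ) + 1) • convexHull ℝ T := by
  classical
  obtain ⟨hcard, hcn⟩ := hAI.card_eq_finrank_add_one_of_lt_one hlt (by simpa using hc) hlam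
  have hsum : ∑ i, (1 - lam i) = 1 := by
    rw [sum_sub_distrib, hlam, sum_const, card_univ, nsmul_one, hcard, ← hcn]
    push_cast; ring
  let b : AffineBasis ι ℝ (Fin n → ℝ) :=
    ⟨v, hAI, hAI.affineSpan_eq_top_iff_card_eq_finrank_add_one.2 hcard⟩
  obtain ⟨j, hzj, hvj⟩ := b.exists_mem_smul_convexHull_update hpos hlt hsum
  set q := ∑ i, (1 - lam i) • v i
  have hqlat : q ∈ latticePoints n := by
    have : q = ∑ i, v i - ∑ i, lam i • v i := by simp [q, sub_smul, sum_sub_distrib]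
    rw [this]
    exact sub_mem_latticePoints (sum_mem_latticePoints fun i _ => hvlat i) hzlat
  have hqconv : q ∈ convexHull ℝ (Set.range v) := by
    have := sum_smul_mem_smul_convexHull (t := univ) (Set.range_nonempty_iff_nonempty.2 b.nonempty)
      (fun i _ => (sub_pos.2 (hlt i)).le) (fun i _ => Set.mem_range_self (f := v) i)
    rwa [hsum, one_smul] at this
  refine ⟨Set.range (Function.update v j q), ?_, Set.finite_range _, ?_, ⟨j, hvj⟩, ?_⟩
  · rintro _ ⟨i, rfl⟩
    by_cases h : i = j
    · subst h; simpa using hqconv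
    · simpa [h] using subset_convexHull ℝ _ (Set.mem_range_self i)
  · rintro _ ⟨i, rfl⟩
    by_cases h : i = j
    · subst h; simpa using hqlat
    · simpa [h] using hvlat i
  · rwa [hlam] at hzj

theorem exists_latticePoint_sub_mem_smul_convexHull {S : Set (Fin n → ℝ)} (hS : S.Finite)
    (hSlat : S ⊆ latticePoints n) {c : ℕ} (hc : n ≤ c + 1) {z : Fin n → ℝ}
    (hz : z ∈ ((c : ℝ) + 1) • convexHull ℝ S) (hzlat : z ∈ latticePoints n) :
    ∃ w ∈ convexHull ℝ S ∩ latticePoints n, z - w ∈ (c : ℝ) • convexHull ℝ S := by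
  classical
  induction hN : (convexHull ℝ S ∩ latticePoints n).ncard using Nat.strong_induction_on
    generalizing S with
  | _ N ih =>
  obtain ⟨x, hx, hxz⟩ := hz
  obtain ⟨ι, _, v, w, hvS, hAI, hw0, hw1, hwx⟩ := eq_pos_convex_span_of_mem_convexHull hx
  set lam : ι → ℝ := fun i => ((c : ℝ) + 1) * w i
  have hz : z = ∑ i, lam i • v i := by
    simp only [← hxz, ← hwx, smul_sum, smul_smul, lam]
  have hlam : ∑ i, lam i = c + 1 := by simp only [lam, ← mul_sum, hw1, mul_one]
  have hvconv : convexHull ℝ (Set.range v) ⊆ convexHull ℝ S := convexHull_mono hvS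
  by_cases hbig : ∃ i, 1 ≤ lam i
  · obtain ⟨i, hi⟩ := hbig
    refine ⟨v i, ⟨subset_convexHull ℝ S (hvS ⟨i, rfl⟩), hSlat (hvS ⟨i, rfl⟩)⟩, ?_⟩
    have := sum_smul_sub_mem_smul_convexHull (v := v)
      (fun t => (mul_pos (by positivity) (hw0 t)).le) hi
    rw [hlam, add_sub_cancel_right] at this
    exact Set.smul_set_mono hvconv (hz ▸ this)
  · push Not at hbig
    obtain ⟨T, hTv, hTfin, hTlat, ⟨j, hvj⟩, hzT⟩ := exists_subset_convexHull_of_coeffs_lt_one hAI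
      (fun i => hSlat (hvS ⟨i, rfl⟩)) (fun i => mul_pos (by positivity) (hw0 i)) hbig hc hlam
      (hz ▸ hzlat)
    have hTS : convexHull ℝ T ⊆ convexHull ℝ S :=
      (convexHull_min hTv (convex_convexHull ℝ _)).trans hvconv
    have hlt : (convexHull ℝ T ∩ latticePoints n).ncard < N := by
      refine hN ▸ Set.ncard_lt_ncard ⟨Set.inter_subset_inter_left _ hTS, fun h => hvj ?_⟩
        ((isBounded_convexHull.2 hS.isBounded).finite_inter_latticePoints)
      exact (h ⟨hvconv (subset_convexHull ℝ _ ⟨j, rfl⟩), hSlat (hvS ⟨j, rfl⟩)⟩).1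
    obtain ⟨w, hw, hzw⟩ := ih _ hlt hTfin hTlat (hz ▸ hzT) rfl
    exact ⟨w, ⟨hTS hw.1, hw.2⟩, Set.smul_set_mono hTS hzw⟩

end Lattice

theorem IsLatticePolytope.succ_smul_inter_latticePoints {n : ℕ} {K : Set (Fin n → ℝ)}
    (hK : IsLatticePolytope K) {k : ℕ} (hk : n ≤ k + 1) :
    ((k + 1 : ℕ) : ℝ) • K ∩ latticePoints n =
      K ∩ latticePoints n + (k : ℝ) • K ∩ latticePoints n := by
  obtain ⟨S, hSfin, -, hSlat, rfl⟩ := hK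
  apply Set.Subset.antisymm
  · rintro z ⟨hz, hzlat⟩
    rw [Nat.cast_succ] at hz
    obtain ⟨w, hw, hzw⟩ := exists_latticePoint_sub_mem_smul_convexHull hSfin hSlat hk hz hzlat
    exact ⟨w, hw, z - w, ⟨hzw, sub_mem_latticePoints hzlat hw.2⟩, add_sub_cancel _ _⟩
  · rintro _ ⟨x, ⟨hx, hxlat⟩, y, ⟨hy, hylat⟩, rfl⟩
    refine ⟨?_, add_mem_latticePoints hxlat hylat⟩
    rw [Nat.cast_succ, add_comm, (convex_convexHull ℝ S).add_smul zero_le_one k.cast_nonneg,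
      one_smul]
    exact Set.add_mem_add hx hy

theorem eventually_solid_of_one_dilate_general (n : ℕ) (K : Set (Fin n → ℝ))
    (hK : IsLatticePolytope K)
    (m : ℕ) (hm : n - 1 ≤ m)
    (heq : ((m : ℝ) • K) ∩ latticePoints n = nsmulSet m (K ∩ latticePoints n)) :
    ∀ m' : ℕ, m ≤ m' →
      ((m' : ℝ) • K) ∩ latticePoints n = nsmulSet m' (K ∩ latticePoints n) := by
  intro m' hm'
  induction m', hm' using Nat.le_induction with
  | base => exact heq
  | succ k hk ih =>
    rw [hK.succ_smul_inter_latticePoints (by omega), ih]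
    rfl

/-- Let `K` be a projectively faithful lattice polytope in `ℝ^n`.  If
`mK ∩ ℤ^n = m(K ∩ ℤ^n)` for some integer `m ≥ n - 1`, then `m'K ∩ ℤ^n = m'(K ∩ ℤ^n)`
for every `m' ≥ m` (hence for all but finitely many positive integers `m'`). -/
theorem eventually_solid_of_one_dilate (n : ℕ) (K : Set (Fin n → ℝ))
    (hK : IsLatticePolytope K) (hpf : ProjectivelyFaithful K)
    (m : ℕ) (hm : n - 1 ≤ m)
    (heq : ((m : ℝ) • K) ∩ latticePoints n = nsmulSet m (K ∩ latticePoints n)) :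
    ∀ m' : ℕ, m ≤ m' →
      ((m' : ℝ) • K) ∩ latticePoints n = nsmulSet m' (K ∩ latticePoints n) :=
  eventually_solid_of_one_dilate_general n K hK m hm heq
end

section
/- Let K be a projectively faithful lattice polytope in ℝ^n. If mK ∩ ℤ^n = m·(K ∩ ℤ^n) holds for all but finitely many positive integers m, then K is locally solid: for every extreme point v of K, the set C_v = ⋃_{m≥1} m·((K − v) ∩ ℤ^n) is unperforated, i.e., whenever x ∈ ℤ^n and mx ∈ C_v for some positive integer m, then x ∈ C_v. -/
open Pointwise

/-! The vertex `v` of `K` is a lattice point, so translating by `-v` moves lattice points of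
`jK` to lattice points of `j(K - v)`. If `m x ∈ C_v`, say `m x ∈ k((K - v) ∩ ℤ^n)`, then
`m x ∈ k(K - v)`, and since `K - v` is convex and contains `0` this gives `x ∈ j(K - v)` for
every `j ≥ k`. Taking `j` with `jK ∩ ℤ^n = j(K ∩ ℤ^n)`, the lattice point `x + j v` of `jK` is a
sum of `j` lattice points of `K`, hence `x` is a sum of `j` lattice points of `K - v`. -/

lemma latticePoints_sub_mem {n : ℕ} {x y : Fin n → ℝ} (hx : x ∈ latticePoints n)
    (hy : y ∈ latticePoints n) : x - y ∈ latticePoints n := by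
  intro i
  obtain ⟨a, ha⟩ := hx i
  obtain ⟨b, hb⟩ := hy i
  exact ⟨a - b, by simp [ha, hb]⟩

lemma latticePoints_add_natCast_smul_mem {n : ℕ} {x v : Fin n → ℝ} (hx : x ∈ latticePoints n)
    (hv : v ∈ latticePoints n) (j : ℕ) : x + (j : ℝ) • v ∈ latticePoints n := by
  intro i
  obtain ⟨a, ha⟩ := hx i
  obtain ⟨b, hb⟩ := hv i
  exact ⟨a + j * b, by simp [ha, hb]⟩

lemma IsLatticePolytope.convex {n : ℕ} {K : Set (Fin n → ℝ)} (hK : IsLatticePolytope K) :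
    Convex ℝ K := by
  obtain ⟨S, -, -, -, rfl⟩ := hK
  exact convex_convexHull ℝ S

lemma IsLatticePolytope.extremePoints_subset_latticePoints {n : ℕ} {K : Set (Fin n → ℝ)}
    (hK : IsLatticePolytope K) : K.extremePoints ℝ ⊆ latticePoints n := by
  obtain ⟨S, -, -, hSL, rfl⟩ := hK
  exact extremePoints_convexHull_subset.trans hSL

lemma nsmulSet_mono {n : ℕ} {A B : Set (Fin n → ℝ)} (hAB : A ⊆ B) (k : ℕ) :
    nsmulSet k A ⊆ nsmulSet k B := by
  induction k with
  | zero => exact le_rfl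
  | succ k ih => exact Set.add_subset_add hAB ih

lemma nsmulSet_subset_smul {n : ℕ} {B : Set (Fin n → ℝ)} (hB : Convex ℝ B) (hne : B.Nonempty)
    (k : ℕ) : nsmulSet k B ⊆ (k : ℝ) • B := by
  induction k with
  | zero => simp [nsmulSet, Set.zero_smul_set hne]
  | succ k ih =>
    calc nsmulSet (k + 1) B = B + nsmulSet k B := rfl
      _ ⊆ (1 : ℝ) • B + (k : ℝ) • B := by rw [one_smul]; exact Set.add_subset_add_left ih
      _ = ((k + 1 : ℕ) : ℝ) • B := by
        rw [← hB.add_smul zero_le_one k.cast_nonneg, Nat.cast_succ, add_comm]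

lemma sub_natCast_smul_mem_nsmulSet_image_sub {n : ℕ} {A : Set (Fin n → ℝ)} (v : Fin n → ℝ)
    (j : ℕ) {y : Fin n → ℝ} (hy : y ∈ nsmulSet j A) :
    y - (j : ℝ) • v ∈ nsmulSet j ((fun x => x - v) '' A) := by
  induction j generalizing y with
  | zero => simp_all [nsmulSet]
  | succ j ih =>
    obtain ⟨a, ha, b, hb, rfl⟩ := hy
    have hsplit : a + b - ((j + 1 : ℕ) : ℝ) • v = (a - v) + (b - (j : ℝ) • v) := by
      rw [Nat.cast_succ, add_smul, one_smul]
      abel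
    rw [hsplit]
    exact Set.add_mem_add ⟨a, ha, rfl⟩ (ih hb)

lemma Convex.smul_set_subset_smul_set_of_zero_mem {E : Type*} [AddCommGroup E] [Module ℝ E]
    {B : Set E} (hB : Convex ℝ B) (h0 : (0 : E) ∈ B) {s t : ℝ} (hs : 0 ≤ s) (hst : s ≤ t) :
    s • B ⊆ t • B :=
  calc s • B = s • B + 0 := (add_zero _).symm
    _ ⊆ s • B + (t - s) • B :=
      Set.add_subset_add_left (Set.zero_subset.2 (Set.zero_mem_smul_set h0))
    _ = t • B := by rw [← hB.add_smul hs (sub_nonneg.2 hst), add_sub_cancel]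

lemma mem_nsmulSet_of_smul_mem_nsmulSet {n : ℕ} {K : Set (Fin n → ℝ)} (hK : Convex ℝ K)
    {v x : Fin n → ℝ} (hvK : v ∈ K) (hvL : v ∈ latticePoints n) (hxL : x ∈ latticePoints n)
    {m k j : ℕ} (hm : 0 < m) (hkj : k ≤ j)
    (hj : ((j : ℝ) • K) ∩ latticePoints n = nsmulSet j (K ∩ latticePoints n))
    (hmx : (m : ℝ) • x ∈ nsmulSet k (((fun x => x - v) '' K) ∩ latticePoints n)) :
    x ∈ nsmulSet j (((fun x => x - v) '' K) ∩ latticePoints n) := by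
  set B := (fun x => x - v) '' K
  have hB : Convex ℝ B := by simpa only [B, sub_eq_neg_add] using hK.translate (-v)
  have h0B : (0 : Fin n → ℝ) ∈ B := ⟨v, hvK, sub_self v⟩
  have hkmj : (k : ℝ) ≤ m * j := by exact_mod_cast hkj.trans (Nat.le_mul_of_pos_left j hm)
  have hxB : x ∈ (j : ℝ) • B := by
    have hmxB := nsmulSet_subset_smul hB ⟨0, h0B⟩ k (nsmulSet_mono Set.inter_subset_left k hmx)
    have := hB.smul_set_subset_smul_set_of_zero_mem h0B k.cast_nonneg hkmj hmxB
    rwa [← smul_smul, Set.smul_mem_smul_set_iff₀ (by positivity)] at this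
  have hxjK : x + (j : ℝ) • v ∈ ((j : ℝ) • K) ∩ latticePoints n := by
    obtain ⟨_, ⟨c, hc, rfl⟩, hcx⟩ := hxB
    refine ⟨⟨c, hc, ?_⟩, latticePoints_add_natCast_smul_mem hxL hvL j⟩
    simp only at hcx ⊢
    rw [← hcx, smul_sub, sub_add_cancel]
  rw [hj] at hxjK
  refine nsmulSet_mono ?_ j (by simpa using sub_natCast_smul_mem_nsmulSet_image_sub v j hxjK)
  rintro _ ⟨a, ⟨haK, haL⟩, rfl⟩
  exact ⟨⟨a, haK, rfl⟩, latticePoints_sub_mem haL hvL⟩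

theorem locallySolid_of_cofinitely_solid_general (n : ℕ) (K : Set (Fin n → ℝ))
    (hK : IsLatticePolytope K)
    (h : {m : ℕ | 0 < m ∧
      ((m : ℝ) • K) ∩ latticePoints n ≠ nsmulSet m (K ∩ latticePoints n)}.Finite) :
    LocallySolid K := by
  intro v hv x hxL m hm hmx
  obtain ⟨k, hk, hmk⟩ := Set.mem_iUnion₂.1 hmx
  obtain ⟨j, hj, hkj⟩ := h.infinite_compl.exists_gt k
  have hj_solid : ((j : ℝ) • K) ∩ latticePoints n = nsmulSet j (K ∩ latticePoints n) := by
    by_contra hne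
    exact hj ⟨by omega, hne⟩
  exact Set.mem_iUnion₂.2 ⟨j, by omega, mem_nsmulSet_of_smul_mem_nsmulSet hK.convex hv.1
    (hK.extremePoints_subset_latticePoints hv) hxL hm hkj.le hj_solid hmk⟩

/-- Let `K` be a projectively faithful lattice polytope in `ℝ^n`.  If
`mK ∩ ℤ^n = m(K ∩ ℤ^n)` for all but finitely many positive integers `m`, then `K` is
locally solid: for every extreme point `v` of `K` the cone
`C_v = ⋃_{m ≥ 1} m((K - v) ∩ ℤ^n)` is unperforated. -/
theorem locallySolid_of_cofinitely_solid (n : ℕ) (K : Set (Fin n → ℝ))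
    (hK : IsLatticePolytope K) (hpf : ProjectivelyFaithful K)
    (h : {m : ℕ | 0 < m ∧
      ((m : ℝ) • K) ∩ latticePoints n ≠ nsmulSet m (K ∩ latticePoints n)}.Finite) :
    LocallySolid K :=
  locallySolid_of_cofinitely_solid_general n K hK h
end
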